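/- arXiv:1003.4003 — 6 statements merged into one kernel-verified Lean document; each statement's English description precedes it below -/
import Mathlib

section
/- The number of graphs on n labeled vertices in which every vertex has even degree equals 2^{C(n-1,2)}. -/
/-!
Deleting a vertex `v₀` is a bijection from the even-degree graphs on `V` onto all graphs on
`V \ {v₀}`: a graph `H` on the remaining vertices extends in exactly one way, by joining `v₀` to
the odd-degree vertices of `H`, and `v₀` then has even degree by the handshake lemma. Hence there
are `2 ^ C(n - 1, 2)` even-degree graphs on `n` vertices.
-/

theorem Nat.card_subtype_option {α : Type*} [Finite α] (p : Option α → Prop) [DecidablePred p] :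
    Nat.card {o // p o} = Nat.card {a // p (some a)} + if p none then 1 else 0 := by
  have := Fintype.ofFinite α
  simp only [Nat.card_eq_fintype_card, Fintype.card_subtype, Finset.card_filter,
    Fintype.sum_option]
  omega

namespace SimpleGraph

variable {V W : Type*}

def edgeSetEquiv (V : Type*) : SimpleGraph V ≃ Set {e : Sym2 V // ¬e.IsDiag} where
  toFun G := {e | e.1 ∈ G.edgeSet}
  invFun s := fromEdgeSet (Subtype.val '' s)
  left_inv G := by
    rw [← edgeSet_inj, edgeSet_fromEdgeSet]
    ext e
    constructor
    · rintro ⟨⟨⟨e, _⟩, he, rfl⟩, _⟩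
      exact he
    · intro he
      exact ⟨⟨⟨e, G.not_isDiag_of_mem_edgeSet he⟩, he, rfl⟩, G.not_isDiag_of_mem_edgeSet he⟩
  right_inv s := by
    ext ⟨e, he⟩
    simp [he]

theorem natCard_simpleGraph [Finite V] : Nat.card (SimpleGraph V) = 2 ^ (Nat.card V).choose 2 := by
  rw [Nat.card_congr (edgeSetEquiv V), Set, Nat.card_fun, Sym2.natCard_subtype_not_diag]
  simp

def AllDegreesEven (G : SimpleGraph V) : Prop := ∀ v, Even (Nat.card {w // G.Adj v w})

theorem allDegreesEven_simpleGraph_iff (e : V ≃ W) {G : SimpleGraph V} :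
    AllDegreesEven (e.simpleGraph G) ↔ AllDegreesEven G := by
  unfold AllDegreesEven
  refine (e.forall_congr fun {v} => ?_).symm
  rw [Nat.card_congr (e.symm.subtypeEquiv fun w => ?_)]
  simp

def oddDegreeVertices (G : SimpleGraph V) : Set V := {v | Odd (Nat.card {w // G.Adj v w})}

@[simp] theorem mem_oddDegreeVertices {G : SimpleGraph V} {v : V} :
    v ∈ G.oddDegreeVertices ↔ Odd (Nat.card {w // G.Adj v w}) := Iff.rfl

theorem even_natCard_oddDegreeVertices [Finite V] (G : SimpleGraph V) :
    Even (Nat.card G.oddDegreeVertices) := by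
  classical
  have := Fintype.ofFinite V
  have hdeg (v : V) : Nat.card {w // G.Adj v w} = G.degree v := by
    rw [← card_neighborSet_eq_degree, ← Nat.card_eq_fintype_card]; rfl
  simp only [oddDegreeVertices, hdeg]
  simpa only [Set.coe_ofPred, Nat.card_eq_fintype_card, Fintype.card_subtype] using
    G.even_card_odd_degree_vertices

def optionExtend (H : SimpleGraph W) (S : Set W) : SimpleGraph (Option W) where
  Adj
    | some a, some b => H.Adj a b
    | none, some b => b ∈ S
    | some a, none => a ∈ S
    | none, none => False
  symm := ⟨by rintro (_ | a) (_ | b) h <;> simp_all [H.adj_comm]⟩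
  loopless := ⟨by rintro (_ | a) h <;> simp_all⟩

@[simp] theorem optionExtend_adj_some_some (H : SimpleGraph W) (S : Set W) (a b : W) :
    (optionExtend H S).Adj (some a) (some b) ↔ H.Adj a b := Iff.rfl

@[simp] theorem optionExtend_adj_none_some (H : SimpleGraph W) (S : Set W) (b : W) :
    (optionExtend H S).Adj none (some b) ↔ b ∈ S := Iff.rfl

@[simp] theorem optionExtend_adj_some_none (H : SimpleGraph W) (S : Set W) (a : W) :
    (optionExtend H S).Adj (some a) none ↔ a ∈ S := Iff.rfl

theorem natCard_optionExtend_adj_none [Finite W] (H : SimpleGraph W) (S : Set W) :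
    Nat.card {w // (optionExtend H S).Adj none w} = Nat.card S := by
  classical
  simp [Nat.card_subtype_option]

theorem natCard_optionExtend_adj_some [Finite W] (H : SimpleGraph W) (S : Set W) (v : W)
    [Decidable (v ∈ S)] :
    Nat.card {w // (optionExtend H S).Adj (some v) w} =
      Nat.card {w // H.Adj v w} + if v ∈ S then 1 else 0 := by
  classical
  simp [Nat.card_subtype_option]

theorem optionExtend_comap_some (G : SimpleGraph (Option W)) :
    optionExtend (G.comap some) {b | G.Adj none (some b)} = G := by
  ext (_ | a) (_ | b) <;> simp [G.adj_comm (some _) none]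

theorem allDegreesEven_optionExtend_iff [Finite W] (H : SimpleGraph W) (S : Set W) :
    AllDegreesEven (optionExtend H S) ↔ S = H.oddDegreeVertices := by
  classical
  simp only [AllDegreesEven, Option.forall, natCard_optionExtend_adj_none,
    natCard_optionExtend_adj_some]
  constructor
  · rintro ⟨-, hsome⟩
    ext v
    by_cases hv : v ∈ S <;> simpa [hv, Nat.even_add_one] using hsome v
  · rintro rfl
    refine ⟨H.even_natCard_oddDegreeVertices, fun v => ?_⟩
    by_cases hv : Odd (Nat.card {w // H.Adj v w})
    · simp [hv]
    · simpa [hv] using Nat.not_odd_iff_even.mp hv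

def allDegreesEvenOptionEquiv [Finite W] :
    {G : SimpleGraph (Option W) // AllDegreesEven G} ≃ SimpleGraph W where
  toFun G := G.1.comap some
  invFun H := ⟨optionExtend H H.oddDegreeVertices, (allDegreesEven_optionExtend_iff H _).2 rfl⟩
  left_inv := by
    rintro ⟨G, hG⟩
    rw [← optionExtend_comap_some G, allDegreesEven_optionExtend_iff] at hG
    ext1
    dsimp only
    rw [← hG, optionExtend_comap_some]
  right_inv H := by
    ext
    simp

theorem natCard_allDegreesEven [Finite V] :
    Nat.card {G : SimpleGraph V // AllDegreesEven G} = 2 ^ (Nat.card V - 1).choose 2 := by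
  cases isEmpty_or_nonempty V with
  | inl hV =>
    have : Unique {G : SimpleGraph V // AllDegreesEven G} :=
      { default := ⟨⊥, isEmptyElim⟩
        uniq G := by ext v; exact isEmptyElim v }
    simp [Nat.card_of_isEmpty]
  | inr hV =>
    classical
    obtain ⟨v₀⟩ := hV
    let e := Equiv.optionSubtypeNe v₀
    rw [← Nat.card_congr <|
        e.simpleGraph.subtypeEquiv fun G => (allDegreesEven_simpleGraph_iff e).symm,
      Nat.card_congr allDegreesEvenOptionEquiv, natCard_simpleGraph, ← Nat.card_congr e,
      Finite.card_option, Nat.add_sub_cancel]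

end SimpleGraph

theorem stmt6 (n : ℕ) :
    Nat.card {G : SimpleGraph (Fin n) //
        ∀ v : Fin n, Even (Nat.card {w : Fin n // G.Adj v w})} =
      2 ^ ((n - 1).choose 2) := by
  exact SimpleGraph.natCard_allDegreesEven.trans (by rw [Nat.card_fin])
end

section
/- Let λ ∈ ℝ^d with λ_{i,j} ∈ {0, π/2} for all i < j, and let G_λ be the graph on {1,...,n} with edge {i,j} iff λ_{i,j} = π/2. Then |ψ(λ)| = 1 if and only if every vertex of G_λ has even degree. -/
open scoped BigOperators Real

/-- Sign of a Boolean: encodes an element of `{-1,1}`. -/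
noncomputable def sgn (b : Bool) : ℝ := if b then 1 else -1

/-- `λ · Z(y)` where `Z(y) = (y_i y_j)_{i<j}`. -/
noncomputable def dotZ (n : ℕ) (lam : Fin n → Fin n → ℝ) (y : Fin n → Bool) : ℝ :=
  ∑ p ∈ Finset.univ.filter (fun p : Fin n × Fin n => p.1 < p.2),
    lam p.1 p.2 * sgn (y p.1) * sgn (y p.2)

/-- Characteristic function `ψ(λ) = 2^{-n} ∑_{y ∈ {-1,1}^n} e^{i λ · Z(y)}`. -/
noncomputable def psi (n : ℕ) (lam : Fin n → Fin n → ℝ) : ℂ :=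
  (1 / 2 ^ n : ℂ) * ∑ y : Fin n → Bool, Complex.exp (Complex.I * (dotZ n lam y : ℝ))

/-! When every `λ_{ij}` is `0` or `π/2`, the factor `e^{i λ_{ij} y_i y_j}` is `1` off the edges of
`G_λ` and `i y_i y_j` on them, so `e^{i λ·Z(y)} = i^{|E|} ∏_k y_k^{deg k}`. The average over `y`
then factorises over the coordinates, and the average of `y_k^d` is `1` for even `d` and `0` for
odd `d`. Hence `ψ(λ) = i^{|E|}` if all degrees are even and `ψ(λ) = 0` otherwise. -/

open Finset Complex

section Fibres

variable {α ι M : Type*} [Fintype α] [DecidableEq α] [CommMonoid M]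

lemma prod_comp_eq_prod_pow_card_fiber (s : Finset ι) (g : ι → α) (f : α → M) :
    ∏ i ∈ s, f (g i) = ∏ a, f a ^ #{i ∈ s | g i = a} := by
  rw [prod_comp]
  refine prod_subset (subset_univ _) fun a _ ha => ?_
  rw [filter_false_of_mem fun i hi hia => ha (mem_image.mpr ⟨i, hi, hia⟩), card_empty, pow_zero]

lemma prod_fst_mul_snd_eq_prod_pow (E : Finset (α × α)) (f : α → M) :
    ∏ p ∈ E, f p.1 * f p.2 = ∏ a, f a ^ (#{p ∈ E | p.1 = a} + #{p ∈ E | p.2 = a}) := by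
  simp only [prod_mul_distrib, prod_comp_eq_prod_pow_card_fiber E Prod.fst,
    prod_comp_eq_prod_pow_card_fiber E Prod.snd, pow_add]

end Fibres

section UpperEdges

variable {α : Type*} [Fintype α] [LinearOrder α] (r : α → α → Prop) [DecidableRel r]

def upperEdges : Finset (α × α) := {p | p.1 < p.2 ∧ r p.1 p.2}

def upperDegree (k : α) : ℕ :=
  #{p ∈ upperEdges r | p.1 = k} + #{p ∈ upperEdges r | p.2 = k}

lemma upperDegree_eq_ncard (k : α) :
    upperDegree r k = Set.ncard {i | (i < k ∧ r i k) ∨ (k < i ∧ r k i)} := by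
  have hfst : #{p ∈ upperEdges r | p.1 = k} = #{i | k < i ∧ r k i} :=
    card_nbij' Prod.snd (fun i => (k, i)) (fun p hp => by aesop (add simp upperEdges))
      (fun i hi => by simp_all [upperEdges]) (fun p hp => by aesop (add simp upperEdges))
      (fun i _ => rfl)
  have hsnd : #{p ∈ upperEdges r | p.2 = k} = #{i | i < k ∧ r i k} :=
    card_nbij' Prod.fst (fun i => (i, k)) (fun p hp => by aesop (add simp upperEdges))
      (fun i hi => by simp_all [upperEdges]) (fun p hp => by aesop (add simp upperEdges))
      (fun i _ => rfl)
  have hdisj : Disjoint (α := Finset α) {i | i < k ∧ r i k} {i | k < i ∧ r k i} :=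
    disjoint_filter.mpr fun i _ hlt hgt => lt_asymm hlt.1 hgt.1
  rw [upperDegree, hfst, hsnd, add_comm, ← card_union_of_disjoint hdisj, ← filter_or,
    ← Set.ncard_coe_finset, coe_filter_univ]

end UpperEdges

lemma sum_sgn_pow (d : ℕ) : ∑ b : Bool, (sgn b : ℂ) ^ d = if Even d then 2 else 0 := by
  rcases Nat.even_or_odd d with h | h
  · simp [sgn, h, h.neg_one_pow, one_add_one_eq_two]
  · simp [sgn, h.neg_one_pow, Nat.not_even_iff_odd.mpr h]

lemma cexp_I_mul_mul_sgn_mul_sgn {l : ℝ} (hl : l = 0 ∨ l = π / 2) (b c : Bool) :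
    exp (I * ↑(l * sgn b * sgn c)) = if l = π / 2 then I * (sgn b * sgn c) else 1 := by
  rcases hl with rfl | rfl
  · simp [Real.pi_div_two_pos.ne]
  · have hneg : exp (-(π / 2 * I)) = -I := by
      rw [← exp_neg_pi_div_two_mul_I, neg_div, neg_mul]
    cases b <;> cases c <;> simp [sgn, mul_comm I, exp_pi_div_two_mul_I, hneg]

section Psi

variable {n : ℕ} {lam : Fin n → Fin n → ℝ}

lemma cexp_I_mul_dotZ (hval : ∀ i j : Fin n, i < j → lam i j = 0 ∨ lam i j = π / 2)
    (y : Fin n → Bool) :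
    exp (I * dotZ n lam y) =
      I ^ #(upperEdges fun i j => lam i j = π / 2) *
        ∏ k, (sgn (y k) : ℂ) ^ upperDegree (fun i j => lam i j = π / 2) k := by
  calc exp (I * dotZ n lam y)
      = ∏ p ∈ univ.filter (fun p : Fin n × Fin n => p.1 < p.2),
          if lam p.1 p.2 = π / 2 then I * ((sgn (y p.1) : ℂ) * sgn (y p.2)) else 1 := by
        rw [dotZ, ofReal_sum, mul_sum, exp_sum]
        exact prod_congr rfl fun p hp =>
          cexp_I_mul_mul_sgn_mul_sgn (hval _ _ (mem_filter.mp hp).2) _ _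
    _ = ∏ p ∈ upperEdges (fun i j => lam i j = π / 2),
          I * ((sgn (y p.1) : ℂ) * sgn (y p.2)) := by
        rw [← prod_filter, filter_filter]
        rfl
    _ = _ := by
        rw [prod_mul_distrib, prod_const, prod_fst_mul_snd_eq_prod_pow _ fun k => (sgn (y k) : ℂ)]
        rfl

lemma psi_eq_ite (hval : ∀ i j : Fin n, i < j → lam i j = 0 ∨ lam i j = π / 2) :
    psi n lam = if ∀ k, Even (upperDegree (fun i j => lam i j = π / 2) k) then
      I ^ #(upperEdges fun i j => lam i j = π / 2) else 0 := by
  have hsum : ∑ y : Fin n → Bool, ∏ k, (sgn (y k) : ℂ) ^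
      upperDegree (fun i j => lam i j = π / 2) k =
        ∏ k, if Even (upperDegree (fun i j => lam i j = π / 2) k) then 2 else 0 := by
    rw [← Fintype.prod_sum fun k b => (sgn b : ℂ) ^ upperDegree _ k]
    simp only [sum_sgn_pow]
  rw [psi]
  simp_rw [cexp_I_mul_dotZ hval]
  rw [← mul_sum, hsum, Fintype.prod_ite_zero]
  split_ifs
  · rw [prod_const, card_univ, Fintype.card_fin, one_div, mul_comm (I ^ _), inv_mul_cancel_left₀ (pow_ne_zero n two_ne_zero)]
  · simp

end Psi

theorem stmt7_general (n : ℕ) (lam : Fin n → Fin n → ℝ)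
    (hval : ∀ i j : Fin n, i < j → lam i j = 0 ∨ lam i j = π / 2) :
    ‖psi n lam‖ = 1 ↔
      ∀ k : Fin n,
        Even (Set.ncard {i : Fin n |
          (i < k ∧ lam i k = π / 2) ∨ (k < i ∧ lam k i = π / 2)}) := by
  simp only [← upperDegree_eq_ncard (fun i j => lam i j = π / 2), psi_eq_ite hval]
  split_ifs with h <;> simp [h]

theorem stmt7 (n : ℕ) (hn : 3 ≤ n) (lam : Fin n → Fin n → ℝ)
    (hval : ∀ i j : Fin n, i < j → lam i j = 0 ∨ lam i j = π / 2) :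
    ‖psi n lam‖ = 1 ↔
      ∀ k : Fin n,
        Even (Set.ncard {i : Fin n |
          (i < k ∧ lam i k = π / 2) ∨ (k < i ∧ lam k i = π / 2)}) :=
  stmt7_general n lam hval
end

section
/- The set Λ = {λ ∈ [-π,π)^d : |ψ(λ)| = 1} has cardinality 2^{2d - n + 1}, where d = C(n,2), and the multiset {ψ(λ) : λ ∈ Λ} contains each of 1, -1, i, -i exactly 2^{2d-n-1} times. -/
open scoped BigOperators Real

/-- `ψ` for `λ` indexed by pairs `i < j`. -/
noncomputable def psiP (n : ℕ) (lam : {p : Fin n × Fin n // p.1 < p.2} → ℝ) : ℂ :=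
  psi n (fun i j => if h : i < j then lam ⟨(i, j), h⟩ else 0)

/-! Write `F(y) = λ · Z(y)`. Then `F(y) = F(1) - 2 c_y(λ)`, where `c_y(λ)` is the weight of the
edges of `K_n` cut by the sign pattern `y`. By strict convexity `|ψ(λ)| = 1` iff all `e^{i F(y)}`
coincide, i.e. iff every cut weight lies in `πℤ`, and then `ψ(λ) = e^{i ∑ λ}`. Cuts of one and of
two vertices force `λ ∈ (π/2)ℤ^d`, so on `[-π, π)^d` we may write `λ = (π/2) a` with
`a ∈ (ℤ/4)^d`; the cut condition says that every vertex has even `a`-degree, and `ψ(λ) = i^{∑ a}`.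
The parity map `(ℤ/4)^d → (ℤ/2)^n` has image the vectors of even sum, so there are
`4^d / 2^(n-1)` solutions; the total sum maps them onto `ℤ/4` (a triangle with weights `1, 1, -1`
has sum `1`), so each of the four values of `ψ` is taken equally often. -/

open Finset Complex

lemma eq_of_norm_sum_smul_eq {V ι : Type*} [NormedAddCommGroup V] [NormedSpace ℝ V]
    [StrictConvexSpace ℝ V] [Fintype ι] {w : ι → ℝ} {z : ι → V} {r : ℝ} (hw : ∀ i, 0 < w i)
    (hw1 : ∑ i, w i = 1) (hz : ∀ i, ‖z i‖ ≤ r) (h : ‖∑ i, w i • z i‖ = r) (i j : ι) :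
    z i = z j := by
  by_contra hij
  exact (norm_sum_lt_of_strictConvexSpace (fun k _ => (hw k).le) hw1 (mem_univ i) (mem_univ j)
    hij (hw i).ne' (hw j).ne' fun k _ => hz k).ne h

lemma exp_I_mul_eq_exp_I_mul_iff {x y : ℝ} :
    cexp (I * x) = cexp (I * y) ↔ ∃ m : ℤ, x = y + m * (2 * π) := by
  rw [← Circle.exp_eq_exp, ← Circle.coe_inj, Circle.coe_exp, Circle.coe_exp, mul_comm I,
    mul_comm I]

lemma AddMonoidHom.card_ker_mul_card_range {G H : Type*} [AddGroup G] [AddGroup H] (f : G →+ H) :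
    Nat.card f.ker * Nat.card f.range = Nat.card G := by
  rw [← AddSubgroup.index_ker, AddSubgroup.card_mul_index]

lemma AddMonoidHom.card_ker_mul_card_of_surjective {G H : Type*} [AddGroup G] [AddGroup H]
    {f : G →+ H} (hf : Function.Surjective f) : Nat.card f.ker * Nat.card H = Nat.card G := by
  rw [← f.card_ker_mul_card_range, f.range_eq_top.2 hf, AddSubgroup.card_top]

def sumHom (ι M : Type*) [Fintype ι] [AddCommGroup M] : (ι → M) →+ M :=
  AddMonoidHom.mk' (fun v => ∑ i, v i) fun _ _ => sum_add_distrib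

lemma Int.eq_of_mul_pi_eq_mul_pi {a b : ℤ} (h : (a : ℝ) * π = b * π) : a = b := by
  exact_mod_cast mul_right_cancel₀ Real.pi_ne_zero h

abbrev Edge (n : ℕ) := {p : Fin n × Fin n // p.1 < p.2}

namespace Edge

variable {n : ℕ} {M : Type*} [AddCommGroup M]

lemma card : Fintype.card (Edge n) = n.choose 2 := by
  rw [Fintype.card_subtype, Fintype.card_product_filter_lt, Fintype.card_fin]

def cutSum (w : Edge n → M) (y : Fin n → Bool) : M :=
  ∑ p with y p.1.1 ≠ y p.1.2, w p

def incidence (M : Type*) [AddCommGroup M] : (Edge n → M) →+ (Fin n → M) :=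
  AddMonoidHom.mk' (fun w k => ∑ p with p.1.1 = k ∨ p.1.2 = k, w p) fun v w => by
    ext k; exact sum_add_distrib

lemma incidence_apply (w : Edge n → M) (k : Fin n) :
    incidence M w k = ∑ p with p.1.1 = k ∨ p.1.2 = k, w p := rfl

lemma incidence_single (e : Edge n) (c : M) (k : Fin n) :
    incidence M (Pi.single e c) k = if e.1.1 = k ∨ e.1.2 = k then c else 0 := by
  rw [incidence_apply, sum_filter, sum_eq_single e (fun p _ hp => by simp [hp]) (by simp)]
  simp

lemma map_cutSum {N : Type*} [AddCommGroup N] (f : M →+ N) (w : Edge n → M) (y : Fin n → Bool) :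
    f (cutSum w y) = cutSum (f ∘ w) y := map_sum f _ _

def vertexCut (k : Fin n) : Fin n → Bool := fun j => j ≠ k

def pairCut (k l : Fin n) : Fin n → Bool := fun j => j ≠ k ∧ j ≠ l

lemma cutSum_vertexCut (w : Edge n → M) (k : Fin n) :
    cutSum w (vertexCut k) = incidence M w k := by
  refine sum_congr (filter_congr fun p _ => ?_) fun _ _ => rfl
  have := p.2.ne
  simp only [vertexCut]
  grind

lemma cutSum_pairCut (w : Edge n → M) {k l : Fin n} (hkl : k < l) :
    cutSum w (pairCut k l) = incidence M w k + incidence M w l - 2 • w ⟨(k, l), hkl⟩ := by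
  have hw : w ⟨(k, l), hkl⟩ = ∑ p, if p = ⟨(k, l), hkl⟩ then w p else 0 := by simp
  simp only [cutSum, incidence_apply, sum_filter]
  rw [hw, smul_sum, ← sum_add_distrib, ← sum_sub_distrib]
  refine sum_congr rfl fun p _ => ?_
  have hp := p.2
  have he : p = ⟨(k, l), hkl⟩ ↔ p.1.1 = k ∧ p.1.2 = l := by rw [Subtype.ext_iff, Prod.ext_iff]
  simp only [pairCut, he]
  split_ifs <;> grind

lemma sum_ite_incident (p : Edge n) (f : Fin n → M) :
    ∑ k, (if p.1.1 = k ∨ p.1.2 = k then f k else 0) = f p.1.1 + f p.1.2 := by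
  have hs : ∀ k, p.1.1 = k ∨ p.1.2 = k ↔ k ∈ ({p.1.1, p.1.2} : Finset (Fin n)) := by
    simp [eq_comm]
  simp only [hs, sum_ite_mem, univ_inter, sum_pair p.2.ne]

lemma sum_incidence (w : Edge n → M) : ∑ k, incidence M w k = 2 • ∑ p, w p := by
  simp only [incidence_apply, sum_filter]
  rw [sum_comm, smul_sum]
  exact sum_congr rfl fun p _ => (sum_ite_incident p fun _ => w p).trans (two_nsmul _).symm

lemma cutSum_eq_sum_incidence (w : Edge n → ZMod 2) (y : Fin n → Bool) :
    cutSum w y = ∑ k with y k = false, incidence (ZMod 2) w k := by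
  have hk : ∀ k, incidence (ZMod 2) w k = ∑ p, if p.1.1 = k ∨ p.1.2 = k then w p else 0 :=
    fun k => by rw [incidence_apply, sum_filter]
  rw [cutSum, sum_filter, sum_congr rfl fun k _ => hk k, sum_comm]
  refine sum_congr rfl fun p _ => ?_
  rw [sum_filter]
  simp only [← ite_and, and_comm (a := y _ = false)]
  simp only [ite_and]
  rw [sum_ite_incident p fun k => if y k = false then w p else 0]
  cases y p.1.1 <;> cases y p.1.2 <;> simp [CharTwo.add_self_eq_zero]

lemma forall_cutSum_eq_zero_iff (w : Edge n → ZMod 2) :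
    (∀ y, cutSum w y = 0) ↔ incidence (ZMod 2) w = 0 := by
  refine ⟨fun h => funext fun k => by rw [← cutSum_vertexCut]; exact h _, fun h y => ?_⟩
  simp [cutSum_eq_sum_incidence, h]

end Edge

section Psi

open Edge

variable {n : ℕ}

noncomputable def phase (lam : Edge n → ℝ) (y : Fin n → Bool) : ℝ :=
  ∑ p, lam p * sgn (y p.1.1) * sgn (y p.1.2)

lemma psiP_eq_sum_smul (lam : Edge n → ℝ) :
    psiP n lam = ∑ y : Fin n → Bool, ((2 : ℝ) ^ n)⁻¹ • cexp (I * phase lam y) := by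
  have hphase : ∀ y, dotZ n (fun i j => if h : i < j then lam ⟨(i, j), h⟩ else 0) y
      = phase lam y := fun y => by
    rw [dotZ, ← sum_subtype_eq_sum_filter, subtype_univ]
    exact sum_congr rfl fun p _ => by rw [dif_pos p.2]
  simp only [psiP, psi, hphase, Complex.real_smul, mul_sum]
  push_cast
  simp [one_div]

lemma phase_eq (lam : Edge n → ℝ) (y : Fin n → Bool) :
    phase lam y = ∑ p, lam p - 2 * cutSum lam y := by
  rw [phase, cutSum, sum_filter, mul_sum, ← sum_sub_distrib]
  refine sum_congr rfl fun p _ => ?_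
  cases y p.1.1 <;> cases y p.1.2 <;> simp [sgn] <;> ring

lemma exp_I_mul_phase_eq_iff (lam : Edge n → ℝ) (y : Fin n → Bool) :
    cexp (I * phase lam y) = cexp (I * ∑ p, lam p) ↔ ∃ m : ℤ, cutSum lam y = m * π := by
  rw [exp_I_mul_eq_exp_I_mul_iff, phase_eq]
  constructor <;> rintro ⟨m, hm⟩ <;> exact ⟨-m, by push_cast; linarith⟩

lemma psiP_eq_exp_sum {lam : Edge n → ℝ} (h : ∀ y, ∃ m : ℤ, cutSum lam y = m * π) :
    psiP n lam = cexp (I * ∑ p, lam p) := by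
  simp only [psiP_eq_sum_smul, (exp_I_mul_phase_eq_iff lam _).2 (h _), ← sum_smul, sum_const,
    card_univ, Fintype.card_fun, Fintype.card_bool, Fintype.card_fin]
  simp

lemma norm_psiP_eq_one_iff (lam : Edge n → ℝ) :
    ‖psiP n lam‖ = 1 ↔ ∀ y, ∃ m : ℤ, cutSum lam y = m * π := by
  refine ⟨fun h y => ?_, fun h => by rw [psiP_eq_exp_sum h, norm_exp_I_mul_ofReal]⟩
  rw [psiP_eq_sum_smul] at h
  have hall := eq_of_norm_sum_smul_eq (fun _ => by positivity) (by simp)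
    (fun y => (norm_exp_I_mul_ofReal _).le) h y fun _ => true
  rwa [← exp_I_mul_phase_eq_iff, show ∑ p, lam p = phase lam fun _ => true by simp [phase, sgn]]

end Psi

section Angles

open Edge

variable {n : ℕ}

lemma exists_int_mul_pi_div_two {lam : Edge n → ℝ} (h : ∀ y, ∃ m : ℤ, cutSum lam y = m * π)
    (p : Edge n) : ∃ m : ℤ, lam p = m * (π / 2) := by
  obtain ⟨⟨k, l⟩, hkl⟩ := p
  obtain ⟨m₁, h₁⟩ := h (vertexCut k)
  obtain ⟨m₂, h₂⟩ := h (vertexCut l)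
  obtain ⟨m₃, h₃⟩ := h (pairCut k l)
  rw [cutSum_vertexCut] at h₁ h₂
  rw [cutSum_pairCut _ hkl, h₁, h₂, two_nsmul] at h₃
  exact ⟨m₁ + m₂ - m₃, by push_cast; linarith⟩

def centeredRep (x : ZMod 4) : ℤ := if x.val < 2 then x.val else x.val - 4

lemma intCast_centeredRep : ∀ x : ZMod 4, ((centeredRep x : ℤ) : ZMod 4) = x := by decide

def mod2 : ZMod 4 →+* ZMod 2 := ZMod.castHom (by norm_num) (ZMod 2)

lemma intCast_centeredRep_zmod_two : ∀ x : ZMod 4, ((centeredRep x : ℤ) : ZMod 2) = mod2 x := by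
  decide

lemma centeredRep_mem_Ico : ∀ x : ZMod 4, -2 ≤ centeredRep x ∧ centeredRep x < 2 := by decide

lemma centeredRep_intCast {m : ℤ} (h₁ : -2 ≤ m) (h₂ : m < 2) : centeredRep m = m := by
  interval_cases m <;> decide

noncomputable def angles (a : Edge n → ZMod 4) : Edge n → ℝ :=
  fun p => centeredRep (a p) * (π / 2)

lemma angles_injective : Function.Injective (angles (n := n)) := fun a b hab => funext fun p => by
  have h := mul_right_cancel₀ (by positivity) (congrFun hab p)
  rw [← intCast_centeredRep (a p), ← intCast_centeredRep (b p), Int.cast_inj.1 h]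

lemma angles_mem_Ico (a : Edge n → ZMod 4) (p : Edge n) : angles a p ∈ Set.Ico (-π) π := by
  obtain ⟨h₁, h₂⟩ := centeredRep_mem_Ico (a p)
  have h₁' : (-2 : ℝ) ≤ centeredRep (a p) := by exact_mod_cast h₁
  have h₂' : (centeredRep (a p) : ℝ) < 2 := by exact_mod_cast h₂
  constructor <;> simp only [angles] <;> nlinarith [Real.pi_pos]

lemma exists_angles_eq {lam : Edge n → ℝ} (hbox : ∀ p, lam p ∈ Set.Ico (-π) π)
    (h : ∀ p, ∃ m : ℤ, lam p = m * (π / 2)) : ∃ a, angles a = lam := by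
  choose m hm using h
  refine ⟨fun p => m p, funext fun p => ?_⟩
  obtain ⟨hlo, hhi⟩ := hbox p
  rw [hm p] at hlo hhi
  have h₁ : (-2 : ℝ) ≤ m p := by nlinarith [Real.pi_pos]
  have h₂ : (m p : ℝ) < 2 := by nlinarith [Real.pi_pos]
  rw [angles, centeredRep_intCast (by exact_mod_cast h₁) (by exact_mod_cast h₂), hm p]

lemma exists_int_mul_pi_iff_even (N : ℤ) : (∃ m : ℤ, (N : ℝ) * (π / 2) = m * π) ↔ Even N := by
  constructor
  · rintro ⟨m, hm⟩
    exact ⟨m, Int.eq_of_mul_pi_eq_mul_pi (by push_cast; linear_combination 2 * hm)⟩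
  · rintro ⟨m, rfl⟩
    exact ⟨m, by push_cast; ring⟩

def parityMap (n : ℕ) : (Edge n → ZMod 4) →+ (Fin n → ZMod 2) :=
  (incidence (ZMod 2)).comp
    (AddMonoidHom.compLeft (mod2 : ZMod 4 →+ ZMod 2) (Edge n))

lemma forall_cutSum_angles_iff (a : Edge n → ZMod 4) :
    (∀ y, ∃ m : ℤ, cutSum (angles a) y = m * π) ↔ parityMap n a = 0 := by
  have hcut : ∀ y, cutSum (angles a) y = (cutSum (centeredRep ∘ a) y : ℤ) * (π / 2) := by
    intro y
    simp [cutSum, angles, sum_mul]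
  simp only [hcut, exists_int_mul_pi_iff_even, ← ZMod.intCast_eq_zero_iff_even, parityMap,
    AddMonoidHom.comp_apply, ← forall_cutSum_eq_zero_iff]
  refine forall_congr' fun y => ?_
  rw [show ((cutSum (centeredRep ∘ a) y : ℤ) : ZMod 2)
    = Int.castAddHom (ZMod 2) (cutSum (centeredRep ∘ a) y) from rfl, map_cutSum]
  exact Iff.of_eq (congrArg (cutSum · y = 0) (funext fun p => intCast_centeredRep_zmod_two (a p)))

end Angles

section Counting

open Edge

variable {n : ℕ}

lemma range_incidence_zmod_two [NeZero n] :
    (incidence (n := n) (ZMod 2)).range = (sumHom (Fin n) (ZMod 2)).ker := by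
  have hsum : ∀ b : Edge n → ZMod 2, ∑ k, incidence (ZMod 2) b k = 0 := fun b => by
    rw [sum_incidence, two_nsmul, CharTwo.add_self_eq_zero]
  refine le_antisymm (by rintro _ ⟨b, rfl⟩; exact hsum b) fun v hv => ?_
  -- The star at vertex `0` with weights `v` has degree `v k` at every `k ≠ 0`; at `0` both its
  -- degree and `v 0` are then determined by having total `0`.
  set b : Edge n → ZMod 2 := fun p => if p.1.1 = 0 then v p.1.2 else 0
  have hoff : ∀ k ≠ 0, incidence (ZMod 2) b k = v k := fun k hk => by
    have hk0 : (0 : Fin n) < k := Fin.pos_iff_ne_zero.2 hk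
    rw [incidence_apply, sum_eq_single ⟨(0, k), hk0⟩]
    · simp [b]
    · intro p hp hne
      simp only [mem_filter, mem_univ, true_and] at hp
      simp only [b]
      split_ifs with h0
      · exact absurd (Subtype.ext (Prod.ext h0 (hp.resolve_left (h0 ▸ hk.symm)))) hne
      · rfl
    · simp
  refine ⟨b, funext fun k => ?_⟩
  rcases eq_or_ne k 0 with rfl | hk
  · have h₁ := hsum b
    have h₂ : ∑ k, v k = 0 := hv
    rw [← add_sum_erase _ _ (mem_univ 0)] at h₁ h₂
    rw [sum_congr rfl fun k hk => hoff k (ne_of_mem_erase hk)] at h₁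
    exact (add_left_inj _).1 (h₁.trans h₂.symm)
  · exact hoff k hk

lemma card_ker_sumHom [NeZero n] : Nat.card (sumHom (Fin n) (ZMod 2)).ker = 2 ^ (n - 1) := by
  have h := AddMonoidHom.card_ker_mul_card_of_surjective
    (f := sumHom (Fin n) (ZMod 2)) fun c => ⟨Pi.single 0 c, by simp [sumHom]⟩
  rw [Nat.card_eq_fintype_card (α := Fin n → ZMod 2), Fintype.card_fun, Nat.card_zmod,
    ZMod.card, Fintype.card_fin,
    show 2 ^ n = 2 ^ (n - 1) * 2 by rw [← pow_succ, Nat.sub_add_cancel NeZero.one_le]] at h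
  exact Nat.eq_of_mul_eq_mul_right two_pos h

lemma range_parityMap : (parityMap n).range = (incidence (ZMod 2)).range := by
  rw [parityMap, AddMonoidHom.range_comp, AddMonoidHom.range_eq_top.2
    (ZMod.castHom_surjective (show 2 ∣ 4 by norm_num)).comp_left, ← AddMonoidHom.range_eq_map]

lemma add_one_le_two_mul_choose_two (hn : 3 ≤ n) : n + 1 ≤ 2 * n.choose 2 := by
  obtain ⟨m, rfl⟩ := Nat.exists_eq_add_of_le' hn
  rw [mul_comm, Nat.choose_two_right, Nat.div_two_mul_two_of_even (Nat.even_mul_pred_self _),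
    show m + 3 - 1 = m + 2 by omega]
  nlinarith

lemma card_ker_parityMap (hn : 3 ≤ n) :
    Nat.card (parityMap n).ker = 2 ^ (2 * n.choose 2 - n + 1) := by
  have : NeZero n := ⟨by omega⟩
  have h := (parityMap n).card_ker_mul_card_range
  rw [range_parityMap, range_incidence_zmod_two, card_ker_sumHom,
    Nat.card_eq_fintype_card (α := Edge n → ZMod 4), Fintype.card_fun, Edge.card, ZMod.card,
    show 4 ^ n.choose 2 = 2 ^ (2 * n.choose 2) by rw [pow_mul]; norm_num,
    show 2 * n.choose 2 = (2 * n.choose 2 - n + 1) + (n - 1) by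
      have := add_one_le_two_mul_choose_two hn; omega, pow_add] at h
  exact Nat.eq_of_mul_eq_mul_right (by positivity) h

end Counting

section Values

open Edge

variable {n : ℕ}

lemma exp_I_mul_int_mul_pi_div_two_eq_iff (N M : ℤ) :
    cexp (I * ↑((N : ℝ) * (π / 2))) = cexp (I * ↑((M : ℝ) * (π / 2))) ↔ (N : ZMod 4) = M := by
  rw [exp_I_mul_eq_exp_I_mul_iff, ZMod.intCast_eq_intCast_iff_dvd_sub]
  constructor
  · rintro ⟨m, hm⟩
    have := Int.eq_of_mul_pi_eq_mul_pi (a := N) (b := M + 4 * m)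
      (by push_cast; linear_combination 2 * hm)
    exact ⟨-m, by push_cast; omega⟩
  · rintro ⟨m, hm⟩
    have hm' : (M : ℝ) - N = 4 * m := by exact_mod_cast hm
    exact ⟨-m, by push_cast; linear_combination (-π / 2) * hm'⟩

lemma psiP_angles_eq_iff {a : Edge n → ZMod 4} (ha : parityMap n a = 0) (M : ℤ) :
    psiP n (angles a) = cexp (I * ↑((M : ℝ) * (π / 2))) ↔ sumHom (Edge n) (ZMod 4) a = M := by
  rw [psiP_eq_exp_sum ((forall_cutSum_angles_iff a).2 ha),
    show ∑ p, angles a p = ((∑ p, centeredRep (a p) : ℤ) : ℝ) * (π / 2) by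
      simp [angles, sum_mul],
    exp_I_mul_int_mul_pi_div_two_eq_iff]
  simp [sumHom, intCast_centeredRep]

lemma setOf_norm_psiP_eq_one :
    {lam : Edge n → ℝ | (∀ p, lam p ∈ Set.Ico (-π) π) ∧ ‖psiP n lam‖ = 1}
      = angles '' (parityMap n).ker := by
  ext lam
  constructor
  · rintro ⟨hbox, hnorm⟩
    rw [norm_psiP_eq_one_iff] at hnorm
    obtain ⟨a, rfl⟩ := exists_angles_eq hbox (exists_int_mul_pi_div_two hnorm)
    exact ⟨a, (forall_cutSum_angles_iff a).1 hnorm, rfl⟩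
  · rintro ⟨a, ha, rfl⟩
    exact ⟨angles_mem_Ico a, (norm_psiP_eq_one_iff _).2 ((forall_cutSum_angles_iff a).2 ha)⟩

lemma setOf_psiP_eq (M : ℤ) :
    {lam : Edge n → ℝ | (∀ p, lam p ∈ Set.Ico (-π) π) ∧
        psiP n lam = cexp (I * ↑((M : ℝ) * (π / 2)))}
      = angles '' {a | parityMap n a = 0 ∧ sumHom (Edge n) (ZMod 4) a = M} := by
  ext lam
  constructor
  · rintro ⟨hbox, hval⟩
    obtain ⟨a, ha, rfl⟩ : lam ∈ angles '' (parityMap n).ker :=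
      setOf_norm_psiP_eq_one ▸ ⟨hbox, by rw [hval, norm_exp_I_mul_ofReal]⟩
    exact ⟨a, ⟨ha, (psiP_angles_eq_iff ha M).1 hval⟩, rfl⟩
  · rintro ⟨a, ⟨ha, hsum⟩, rfl⟩
    exact ⟨angles_mem_Ico a, (psiP_angles_eq_iff ha M).2 hsum⟩

lemma exists_mem_ker_parityMap_sum_eq_one (hn : 3 ≤ n) :
    ∃ t ∈ (parityMap n).ker, sumHom (Edge n) (ZMod 4) t = 1 := by
  let e₀₁ : Edge n := ⟨(⟨0, by omega⟩, ⟨1, by omega⟩), by simp [Fin.lt_def]⟩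
  let e₀₂ : Edge n := ⟨(⟨0, by omega⟩, ⟨2, by omega⟩), by simp [Fin.lt_def]⟩
  let e₁₂ : Edge n := ⟨(⟨1, by omega⟩, ⟨2, by omega⟩), by simp [Fin.lt_def]⟩
  let t : Edge n → ZMod 4 := Pi.single e₀₁ 1 + Pi.single e₁₂ 1 - Pi.single e₀₂ 1
  have hmod : (fun p => mod2 (t p)) = Pi.single e₀₁ 1 + Pi.single e₁₂ 1 - Pi.single e₀₂ 1 := by
    ext p
    simp [t, Pi.single_apply, apply_ite mod2]
  refine ⟨t, ?_, by simp [t, sumHom, sum_add_distrib, sum_sub_distrib]⟩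
  rw [AddMonoidHom.mem_ker]
  ext k
  change incidence (ZMod 2) (fun p => mod2 (t p)) k = 0
  simp only [hmod, map_add, map_sub, Pi.add_apply, Pi.sub_apply, incidence_single, e₀₁, e₀₂,
    e₁₂, Fin.ext_iff]
  split_ifs <;> first | omega | rfl

lemma card_setOf_parityMap_eq_zero_sum_eq (hn : 3 ≤ n) (κ : ZMod 4) :
    Nat.card {a | parityMap n a = 0 ∧ sumHom (Edge n) (ZMod 4) a = κ}
      = 2 ^ (2 * n.choose 2 - n - 1) := by
  set U := (sumHom (Edge n) (ZMod 4)).comp (parityMap n).ker.subtype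
  obtain ⟨t, ht, ht1⟩ := exists_mem_ker_parityMap_sum_eq_one hn
  have hU : Function.Surjective U := fun κ => ⟨κ.val • ⟨t, ht⟩, by
    rw [map_nsmul]
    change κ.val • sumHom (Edge n) (ZMod 4) t = κ
    rw [ht1, Nat.smul_one_eq_cast, ZMod.natCast_zmod_val]⟩
  have hset : {a | parityMap n a = 0 ∧ sumHom (Edge n) (ZMod 4) a = κ}
      = Subtype.val '' (U ⁻¹' {κ}) := by
    ext a
    simp [U, and_comm]
  rw [hset, Nat.card_image_of_injective Subtype.val_injective,
    Nat.card_congr (AddMonoidHom.fiberEquivKerOfSurjective hU κ)]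
  have h := AddMonoidHom.card_ker_mul_card_of_surjective hU
  rw [card_ker_parityMap hn, Nat.card_zmod,
    show 2 * n.choose 2 - n + 1 = (2 * n.choose 2 - n - 1) + 2 by
      have := add_one_le_two_mul_choose_two hn; omega, pow_add] at h
  exact Nat.eq_of_mul_eq_mul_right (by norm_num) h

end Values

lemma exists_exp_I_mul_int_mul_pi_div_two_eq {c : ℂ} (hc : c ∈ ({1, -1, I, -I} : Set ℂ)) :
    ∃ M : ℤ, cexp (I * ↑((M : ℝ) * (π / 2))) = c := by
  simp only [Set.mem_insert_iff, Set.mem_singleton_iff] at hc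
  rcases hc with rfl | rfl | rfl | rfl
  · exact ⟨0, by simp⟩
  · exact ⟨2, by convert exp_pi_mul_I using 2; push_cast; ring⟩
  · exact ⟨1, by convert exp_pi_div_two_mul_I using 2; push_cast; ring⟩
  · refine ⟨-1, ?_⟩
    rw [show I * ↑(((-1 : ℤ) : ℝ) * (π / 2)) = -(π / 2 * I) by push_cast; ring, exp_neg,
      exp_pi_div_two_mul_I, inv_I]

theorem stmt9 (n : ℕ) (hn : 3 ≤ n) :
    Nat.card {lam : {p : Fin n × Fin n // p.1 < p.2} → ℝ //
        (∀ p, lam p ∈ Set.Ico (-π) π) ∧ ‖psiP n lam‖ = 1} =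
      2 ^ (2 * n.choose 2 - n + 1) ∧
    ∀ c ∈ ({1, -1, Complex.I, -Complex.I} : Set ℂ),
      Nat.card {lam : {p : Fin n × Fin n // p.1 < p.2} → ℝ //
          (∀ p, lam p ∈ Set.Ico (-π) π) ∧ psiP n lam = c} =
        2 ^ (2 * n.choose 2 - n - 1) := by
  refine ⟨?_, fun c hc => ?_⟩
  · rw [← Set.coe_ofPred, setOf_norm_psiP_eq_one, Nat.card_image_of_injective angles_injective]
    exact card_ker_parityMap hn
  · obtain ⟨M, rfl⟩ := exists_exp_I_mul_int_mul_pi_div_two_eq hc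
    rw [← Set.coe_ofPred, setOf_psiP_eq, Nat.card_image_of_injective angles_injective]
    exact card_setOf_parityMap_eq_zero_sum_eq hn M
end

section
/- For all λ ∈ ℝ^d and every k ∈ {1,...,n}: |ψ(λ)|² ≤ 1/2 + (1/2) ∏_{i ≠ k} cos(2 λ_{i,k}). -/
/-!
Split `λ · Z(y)` as `y_k S_k(y) + R_k(y)`, where `S_k(y) = ∑_{i ≠ k} λ_{i,k} y_i` collects the
pairs through `k` and neither `S_k` nor `R_k` involves `y_k`. Flipping `y_k` changes the phase by
`2 y_k S_k(y)`, so pairing `y` with its flip gives `|ψ(λ)| ≤ 𝔼 |cos S_k(y)|`. By Cauchy–Schwarz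
`|ψ(λ)|² ≤ 𝔼 cos² S_k = 1/2 + 𝔼 cos(2 S_k) / 2`, and since the `y_i` are independent signs,
`𝔼 cos(2 S_k) = ∏_{i ≠ k} cos(2 λ_{i,k})`.
-/

open scoped BigOperators Real

open Finset

lemma sgn_not (b : Bool) : sgn (!b) = -sgn b := by cases b <;> simp [sgn]

lemma cos_sgn_mul (b : Bool) (x : ℝ) : Real.cos (sgn b * x) = Real.cos x := by
  cases b <;> simp [sgn]

lemma sum_cos_sum_mul_sgn {ι : Type*} [Fintype ι] [DecidableEq ι] (s : Finset ι) (a : ι → ℝ) :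
    ∑ y : ι → Bool, Real.cos (∑ i ∈ s, a i * sgn (y i)) =
      2 ^ Fintype.card ι * ∏ i ∈ s, Real.cos (a i) := by
  set g : ι → Bool → ℂ := fun i b =>
    if i ∈ s then Complex.exp ((a i * sgn b : ℝ) * Complex.I) else 1
  have hexp : ∀ y : ι → Bool,
      Complex.exp ((∑ i ∈ s, a i * sgn (y i) : ℝ) * Complex.I) = ∏ i, g i (y i) := by
    intro y
    rw [prod_ite_mem, univ_inter, ← Complex.exp_sum]
    push_cast
    rw [sum_mul]
  have hfactor : ∀ i, ∑ b, g i b = 2 * if i ∈ s then (Real.cos (a i) : ℂ) else 1 := by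
    intro i
    simp only [g]
    split_ifs
    · rw [Fintype.sum_bool, Complex.ofReal_cos, Complex.cos]
      simp only [sgn]
      push_cast
      ring_nf
    · norm_num
  have hcomplex : ∑ y : ι → Bool, Complex.exp ((∑ i ∈ s, a i * sgn (y i) : ℝ) * Complex.I) =
      ((2 ^ Fintype.card ι * ∏ i ∈ s, Real.cos (a i) : ℝ) : ℂ) := by
    simp_rw [hexp, ← Fintype.prod_sum g, hfactor]
    rw [prod_mul_distrib, prod_const, card_univ, prod_ite_mem, univ_inter]
    push_cast
    rfl
  simpa only [Complex.re_sum, Complex.exp_ofReal_mul_I_re, Complex.ofReal_re] using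
    congrArg Complex.re hcomplex

lemma norm_exp_add_exp (a b : ℝ) :
    ‖Complex.exp (a * Complex.I) + Complex.exp (b * Complex.I)‖ =
      2 * |Real.cos ((a - b) / 2)| := by
  have h : Complex.exp (a * Complex.I) + Complex.exp (b * Complex.I) =
      Complex.exp (((a + b) / 2 : ℝ) * Complex.I) * (2 * Real.cos ((a - b) / 2)) := by
    rw [Complex.ofReal_cos, Complex.cos, mul_div_cancel₀ _ two_ne_zero, mul_add,
      ← Complex.exp_add, ← Complex.exp_add]
    push_cast
    ring_nf
  rw [h, norm_mul, Complex.norm_exp_ofReal_mul_I, norm_mul, Complex.norm_real, Real.norm_eq_abs]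
  norm_num

lemma two_mul_norm_sum_le_sum_norm_add {α E : Type*} [Fintype α] [SeminormedAddCommGroup E]
    [NormedSpace ℝ E] (σ : Equiv.Perm α) (f : α → E) :
    2 * ‖∑ x, f x‖ ≤ ∑ x, ‖f x + f (σ x)‖ :=
  calc 2 * ‖∑ x, f x‖ = ‖∑ x, (f x + f (σ x))‖ := by
        rw [sum_add_distrib, Equiv.sum_comp σ f, ← two_smul ℝ, norm_smul, Real.norm_two]
    _ ≤ _ := norm_sum_le _ _

lemma sum_lt_pairs_through {α M : Type*} [Fintype α] [LinearOrder α] [AddCommMonoid M]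
    (k : α) (F : α → α → M) :
    ∑ p ∈ univ.filter (fun p : α × α => p.1 < p.2 ∧ (p.1 = k ∨ p.2 = k)), F p.1 p.2 =
      ∑ i ∈ univ.filter (· ≠ k), if i < k then F i k else F k i := by
  symm
  refine sum_nbij' (fun i => (min i k, max i k)) (fun p => if p.1 = k then p.2 else p.1)
    ?_ ?_ ?_ ?_ ?_
  all_goals intro x hx
  all_goals simp only [mem_filter, mem_univ, true_and] at hx ⊢
  all_goals grind

def flipAt {ι : Type*} [DecidableEq ι] (k : ι) (y : ι → Bool) : ι → Bool :=
  Function.update y k (!y k)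

lemma flipAt_involutive {ι : Type*} [DecidableEq ι] (k : ι) :
    Function.Involutive (flipAt k) := by
  intro y
  ext i
  by_cases h : i = k
  · subst h; simp [flipAt]
  · simp [flipAt, h]

section Link

variable {n : ℕ} (lam : Fin n → Fin n → ℝ) (k : Fin n)

noncomputable def pairWeight (i : Fin n) : ℝ :=
  if i < k then lam i k else lam k i

noncomputable def linkSum (y : Fin n → Bool) : ℝ :=
  ∑ i ∈ univ.filter (· ≠ k), pairWeight lam k i * sgn (y i)

lemma dotZ_flipAt (y : Fin n → Bool) :
    dotZ n lam (flipAt k y) = dotZ n lam y - 2 * (sgn (y k) * linkSum lam k y) := by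
  set t : (Fin n → Bool) → Fin n × Fin n → ℝ := fun y p =>
    lam p.1 p.2 * sgn (y p.1) * sgn (y p.2)
  set through := univ.filter (fun p : Fin n × Fin n => p.1 < p.2 ∧ (p.1 = k ∨ p.2 = k))
  set away := univ.filter (fun p : Fin n × Fin n => p.1 < p.2 ∧ ¬(p.1 = k ∨ p.2 = k))
  have hsplit : ∀ y, dotZ n lam y = ∑ p ∈ through, t y p + ∑ p ∈ away, t y p := by
    intro y
    rw [dotZ, ← sum_filter_add_sum_filter_not _ (fun p => p.1 = k ∨ p.2 = k), filter_filter,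
      filter_filter]
  have hthrough : ∑ p ∈ through, t (flipAt k y) p = -∑ p ∈ through, t y p := by
    rw [← sum_neg_distrib]
    refine sum_congr rfl fun p hp => ?_
    obtain ⟨i, j⟩ := p
    obtain ⟨hlt, rfl | rfl⟩ := (mem_filter.mp hp).2
    · simp [t, flipAt, hlt.ne', sgn_not]
    · simp [t, flipAt, hlt.ne, sgn_not]
  have haway : ∑ p ∈ away, t (flipAt k y) p = ∑ p ∈ away, t y p := by
    refine sum_congr rfl fun p hp => ?_
    obtain ⟨-, h⟩ := (mem_filter.mp hp).2
    push Not at h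
    simp [t, flipAt, h.1, h.2]
  have hlink : ∑ p ∈ through, t y p = sgn (y k) * linkSum lam k y := by
    rw [sum_lt_pairs_through k (fun i j => t y (i, j)), linkSum, mul_sum]
    refine sum_congr rfl fun i _ => ?_
    simp only [t, pairWeight]
    split_ifs <;> ring
  rw [hsplit, hsplit, hthrough, haway, hlink]
  ring

lemma norm_psi_le_sum_abs_cos_linkSum :
    ‖psi n lam‖ ≤ 1 / 2 ^ n * ∑ y : Fin n → Bool, |Real.cos (linkSum lam k y)| := by
  set e : (Fin n → Bool) → ℂ := fun y => Complex.exp ((dotZ n lam y : ℝ) * Complex.I)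
  have hpair : ∀ y, ‖e y + e (flipAt k y)‖ = 2 * |Real.cos (linkSum lam k y)| := by
    intro y
    rw [norm_exp_add_exp, dotZ_flipAt, sub_sub_cancel, mul_div_cancel_left₀ _ two_ne_zero,
      cos_sgn_mul]
  have hbound := two_mul_norm_sum_le_sum_norm_add (flipAt_involutive k).toPerm e
  simp only [Function.Involutive.coe_toPerm, hpair, ← mul_sum] at hbound
  have hpsi : psi n lam = (1 / 2 ^ n : ℂ) * ∑ y, e y := by
    simp only [psi, e, mul_comm Complex.I]
  have hscale : ‖(1 / 2 ^ n : ℂ)‖ = 1 / 2 ^ n := by simp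
  rw [hpsi, norm_mul, hscale]
  gcongr
  linarith

lemma sum_cos_sq_linkSum :
    ∑ y : Fin n → Bool, Real.cos (linkSum lam k y) ^ 2 =
      2 ^ n * (1 / 2 + 1 / 2 * ∏ i ∈ univ.filter (· ≠ k), Real.cos (2 * pairWeight lam k i)) := by
  have hdouble : ∀ y, 2 * linkSum lam k y =
      ∑ i ∈ univ.filter (· ≠ k), 2 * pairWeight lam k i * sgn (y i) := by
    intro y
    simp only [linkSum, mul_sum, mul_assoc]
  simp_rw [Real.cos_sq, sum_add_distrib, ← sum_div, hdouble,
    sum_cos_sum_mul_sgn (univ.filter (· ≠ k)) (fun i => 2 * pairWeight lam k i)]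
  simp only [sum_const, card_univ, Fintype.card_pi, Fintype.card_bool, prod_const,
    Fintype.card_fin, nsmul_eq_mul, Nat.cast_pow, Nat.cast_ofNat]
  ring

end Link

theorem stmt10_general (n : ℕ) (lam : Fin n → Fin n → ℝ) (k : Fin n) :
    (‖psi n lam‖) ^ 2 ≤
      1 / 2 + 1 / 2 * ∏ i ∈ Finset.univ.filter (fun i : Fin n => i ≠ k),
        Real.cos (2 * (if i < k then lam i k else lam k i)) := by
  have hCS : (∑ y : Fin n → Bool, |Real.cos (linkSum lam k y)|) ^ 2 ≤
      2 ^ n * ∑ y : Fin n → Bool, Real.cos (linkSum lam k y) ^ 2 := by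
    simpa [sq_abs] using sq_sum_le_card_mul_sum_sq (s := univ)
      (f := fun y : Fin n → Bool => |Real.cos (linkSum lam k y)|)
  calc ‖psi n lam‖ ^ 2
      ≤ (1 / 2 ^ n * ∑ y : Fin n → Bool, |Real.cos (linkSum lam k y)|) ^ 2 := by
        gcongr
        exact norm_psi_le_sum_abs_cos_linkSum lam k
    _ ≤ (1 / 2 ^ n) ^ 2 * (2 ^ n * ∑ y : Fin n → Bool, Real.cos (linkSum lam k y) ^ 2) := by
        rw [mul_pow]
        gcongr
    _ = _ := by
        rw [sum_cos_sq_linkSum]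
        field_simp
        rfl

theorem stmt10 (n : ℕ) (hn : 2 ≤ n) (lam : Fin n → Fin n → ℝ) (k : Fin n) :
    (‖psi n lam‖) ^ 2 ≤
      1 / 2 + 1 / 2 * ∏ i ∈ Finset.univ.filter (fun i : Fin n => i ≠ k),
        Real.cos (2 * (if i < k then lam i k else lam k i)) :=
  stmt10_general n lam k
end

section
/- Any m-dimensional real linear subspace of ℝ^t (t ≥ m) contains at most 2^m vectors with all coordinates in {-1, 1}. -/
/-! The coordinate functionals restricted to `W` span its dual, so `m` of them form a basis of
the dual. A vector of `W` is therefore determined by these `m` coordinates, and a `±1` vector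
has at most `2 ^ m` possible values there. -/

open Module Set

namespace Submodule

variable {K ι : Type*} [Field K] (W : Submodule K (ι → K)) [FiniteDimensional K W]

theorem exists_finset_card_eq_finrank_injOn_restrict :
    ∃ s : Finset ι, s.card = finrank K W ∧ InjOn s.restrict (W : Set (ι → K)) := by
  let coord : ι → Dual K W := fun i => LinearMap.proj i ∘ₗ W.subtype
  have hspan : span K (range coord) = ⊤ := by
    refine span_eq_top_of_ne_zero fun z hz => ?_
    obtain ⟨i, hi⟩ := Function.ne_iff.mp fun h : (z : ι → K) = 0 => hz (Subtype.ext h)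
    exact ⟨coord i, mem_range_self i, hi⟩
  obtain ⟨κ, a, ha, hspan_a, hli⟩ := exists_linearIndependent' K coord
  let b : Basis κ K (Dual K W) := .mk hli (by rw [hspan_a, hspan])
  have : Finite κ := Module.Finite.finite_basis b
  have := Fintype.ofFinite κ
  refine ⟨Finset.univ.map ⟨a, ha⟩, ?_, fun v hv w hw hvw => ?_⟩
  · rw [Finset.card_map, Finset.card_univ, ← finrank_eq_card_basis b, Subspace.dual_finrank_eq]
  have hdiff : Dual.eval K W (⟨v, hv⟩ - ⟨w, hw⟩) = 0 := b.ext fun k => by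
    have := congrFun hvw ⟨a k, Finset.mem_map_of_mem _ (Finset.mem_univ k)⟩
    simpa [b, coord, sub_eq_zero] using this
  funext i
  simpa [coord, sub_eq_zero] using LinearMap.congr_fun hdiff (coord i)

theorem ncard_setOf_forall_mem_le (A : Finset K) :
    {v : ι → K | v ∈ W ∧ ∀ i, v i ∈ A}.ncard ≤ A.card ^ finrank K W := by
  classical
  obtain ⟨s, hs, hinj⟩ := W.exists_finset_card_eq_finrank_injOn_restrict
  calc {v : ι → K | v ∈ W ∧ ∀ i, v i ∈ A}.ncard
      ≤ (Fintype.piFinset fun _ : s => A : Set (s → K)).ncard :=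
        ncard_le_ncard_of_injOn s.restrict (fun v hv => by simpa using fun i _ => hv.2 i)
          (hinj.mono fun _ hv => hv.1)
    _ = A.card ^ finrank K W := by
        rw [ncard_coe_finset, Fintype.card_piFinset, Finset.prod_const, Finset.card_univ,
          Fintype.card_coe, hs]

end Submodule

theorem stmt16_general (t m : ℕ) (W : Submodule ℝ (Fin t → ℝ))
    (hW : Module.finrank ℝ W = m) :
    Set.ncard {v : Fin t → ℝ | v ∈ W ∧ ∀ i, v i = 1 ∨ v i = -1} ≤ 2 ^ m := by
  have hsigns : {v : Fin t → ℝ | v ∈ W ∧ ∀ i, v i = 1 ∨ v i = -1} =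
      {v | v ∈ W ∧ ∀ i, v i ∈ ({1, -1} : Finset ℝ)} := by
    simp only [Finset.mem_insert, Finset.mem_singleton]
  have hcard : ({1, -1} : Finset ℝ).card = 2 := by norm_num
  simpa only [hsigns, hcard, hW] using W.ncard_setOf_forall_mem_le {1, -1}

theorem stmt16 (t m : ℕ) (hm : m ≤ t) (W : Submodule ℝ (Fin t → ℝ))
    (hW : Module.finrank ℝ W = m) :
    Set.ncard {v : Fin t → ℝ | v ∈ W ∧ ∀ i, v i = 1 ∨ v i = -1} ≤ 2 ^ m :=
  stmt16_general t m W hW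
end

section
/- For n ≥ 2 and t ≥ n, the number N_{n,t} of n × t partial Hadamard matrices satisfies N_{n,t} ≤ 2^{t - n + 1} N_{n-1,t}. Consequently, the number of n × n Hadamard matrices is at most 2^{C(n+1,2)}. -/
open scoped BigOperators

/-- `Y` is an `n × t` partial Hadamard matrix. -/
def IsPartialHadamard (n t : ℕ) (Y : Fin n → Fin t → ℤ) : Prop :=
  (∀ i s, Y i s = 1 ∨ Y i s = -1) ∧
  ∀ i j : Fin n, i ≠ j → ∑ s : Fin t, Y i s * Y j s = 0

/-- The number of `n × t` partial Hadamard matrices. -/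
noncomputable def numPH (n t : ℕ) : ℕ :=
  Nat.card {Y : Fin n → Fin t → ℤ // IsPartialHadamard n t Y}

/-!
Appending a row `x` to an `m × t` partial Hadamard matrix `R` requires `R x = 0`. Since
`R Rᵀ = t I`, the columns of `R` span `ℚ^m`, so some `m` of them form a basis; a solution of
`R x = 0` is then determined by its `t - m` entries outside these columns, which leaves at most
`2^(t-m)` possible `±1` rows. Iterating from the empty matrix gives
`N_{n,n} ≤ 2^(n + (n-1) + ⋯ + 1) = 2^C(n+1,2)`.
-/

open Matrix

theorem Matrix.mulVec_eq_sum_smul_col {K m n : Type*} [CommSemiring K] [Fintype n]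
    (A : Matrix m n K) (x : n → K) : A *ᵥ x = ∑ j, x j • A.col j := by
  ext i
  simp [mulVec, dotProduct, mul_comm]

theorem Matrix.exists_finset_card_eq_eq_of_mulVec_eq {K m n : Type*} [Field K] [Fintype m]
    [Fintype n] (A : Matrix m n K) (hA : Function.Surjective A.mulVec) :
    ∃ T : Finset n, T.card = Fintype.card m ∧
      ∀ x y : n → K, A *ᵥ x = A *ᵥ y → (∀ j ∉ T, x j = y j) → x = y := by
  classical
  obtain ⟨b, -, -, hb, hli⟩ :=
    exists_linearIndepOn_extension (linearIndepOn_empty K A.col) (Set.empty_subset Set.univ)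
  have hspan : Submodule.span K (A.col '' b) = ⊤ := by
    rw [eq_top_iff, ← (LinearMap.range_eq_top (f := A.mulVecLin)).mpr hA, range_mulVecLin,
      Submodule.span_le, ← Set.image_univ]
    exact hb
  refine ⟨b.toFinset, ?_, fun x y hxy hT => ?_⟩
  · have hcard := finrank_span_eq_card hli
    rw [← Set.image_eq_range, hspan, finrank_top, Module.finrank_fintype_fun_eq_card] at hcard
    rw [hcard, Set.toFinset_card]
  · have hsum : ∑ j ∈ b.toFinset, (x - y) j • A.col j = 0 := by
      rw [Finset.sum_subset (Finset.subset_univ _) fun j _ hj => by simp [hT j hj],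
        ← mulVec_eq_sum_smul_col, mulVec_sub, hxy, sub_self]
    have hzero := (linearIndepOn_finset_iff (s := b.toFinset)).mp (by simpa using hli) _ hsum
    funext j
    by_cases hj : j ∈ b.toFinset
    · exact sub_eq_zero.mp (hzero j hj)
    · exact hT j hj

def IsSignVector {ι : Type*} (x : ι → ℤ) : Prop :=
  ∀ i, x i = 1 ∨ x i = -1

theorem IsSignVector.eq_of_decide_eq {ι : Type*} {x y : ι → ℤ} (hx : IsSignVector x)
    (hy : IsSignVector y) {i : ι} (h : decide (x i = 1) = decide (y i = 1)) : x i = y i := by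
  rcases hx i with hxi | hxi <;> rcases hy i with hyi | hyi <;> simp_all

instance {ι : Type*} [Finite ι] : Finite {x : ι → ℤ // IsSignVector x} :=
  Finite.of_injective (fun x i => decide (x.1 i = 1)) fun x y h =>
    Subtype.ext (funext fun i => x.2.eq_of_decide_eq y.2 (congrFun h i))

instance {ι : Type*} [Finite ι] (P : (ι → ℤ) → Prop) :
    Finite {x : ι → ℤ // IsSignVector x ∧ P x} :=
  Finite.of_injective (fun x => (⟨x.1, x.2.1⟩ : {x : ι → ℤ // IsSignVector x}))
    fun _ _ h => Subtype.ext (congrArg Subtype.val h :)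

instance (n t : ℕ) : Finite {Y : Fin n → Fin t → ℤ // IsPartialHadamard n t Y} :=
  Finite.of_injective (fun Y i => (⟨Y.1 i, Y.2.1 i⟩ : {x : Fin t → ℤ // IsSignVector x}))
    fun _ _ h => Subtype.ext (funext fun i => congrArg Subtype.val (congrFun h i))

namespace IsPartialHadamard

variable {m t : ℕ}

theorem mul_transpose_self {Y : Matrix (Fin m) (Fin t) ℤ} (hY : IsPartialHadamard m t Y) :
    Y * Yᵀ = (t : ℤ) • 1 := by
  ext i j
  rw [mul_apply, Matrix.smul_apply, one_apply]
  by_cases hij : i = j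
  · subst hij
    have hsq : ∀ s, Y i s * Y i s = 1 := fun s => by rcases hY.1 i s with h | h <;> simp [h]
    simp [hsq]
  · simpa [hij] using hY.2 i j hij

theorem surjective_mulVec_map {Y : Matrix (Fin m) (Fin t) ℤ} (hY : IsPartialHadamard m t Y)
    (ht : 0 < t) : Function.Surjective (Y.map (Int.cast : ℤ → ℚ)).mulVec := by
  set A := Y.map (Int.cast : ℤ → ℚ)
  have hA : A * Aᵀ = (t : ℚ) • 1 := by
    calc A * Aᵀ = (Y * Yᵀ).map (Int.castRingHom ℚ) := by
          rw [Matrix.map_mul, transpose_map]; rfl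
      _ = (t : ℚ) • 1 := by
        rw [hY.mul_transpose_self]
        ext i j
        simp only [map_apply, Matrix.smul_apply, one_apply, smul_eq_mul]
        split_ifs <;> simp
  intro y
  refine ⟨Aᵀ *ᵥ ((t : ℚ)⁻¹ • y), ?_⟩
  have htQ : (t : ℚ) ≠ 0 := by exact_mod_cast ht.ne'
  rw [mulVec_mulVec, hA, mulVec_smul, smul_mulVec, one_mulVec, smul_smul, inv_mul_cancel₀ htQ,
    one_smul]

theorem card_signVector_mulVec_eq_zero_le {Y : Matrix (Fin m) (Fin t) ℤ}
    (hY : IsPartialHadamard m t Y) (ht : 0 < t) :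
    Nat.card {x : Fin t → ℤ // IsSignVector x ∧ Y *ᵥ x = 0} ≤ 2 ^ (t - m) := by
  classical
  obtain ⟨T, hTcard, hT⟩ :=
    (Y.map (Int.cast : ℤ → ℚ)).exists_finset_card_eq_eq_of_mulVec_eq
      (hY.surjective_mulVec_map ht)
  have hcast : ∀ x : Fin t → ℤ,
      Y.map (Int.cast : ℤ → ℚ) *ᵥ (Int.cast ∘ x) = Int.cast ∘ (Y *ᵥ x) :=
    fun x => funext fun i => ((Int.castRingHom ℚ).map_mulVec Y x i).symm
  have hinj : Function.Injective fun x : {x : Fin t → ℤ // IsSignVector x ∧ Y *ᵥ x = 0} =>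
      fun s : {s // s ∉ T} => decide (x.1 s = 1) := by
    rintro ⟨x, hx, hYx⟩ ⟨y, hy, hYy⟩ h
    have hcompl : ∀ s ∉ T, x s = y s := fun s hs =>
      hx.eq_of_decide_eq hy (congrFun h ⟨s, hs⟩)
    have hxy := hT (Int.cast ∘ x) (Int.cast ∘ y) (by rw [hcast, hcast, hYx, hYy])
      (fun s hs => by simp [hcompl s hs])
    exact Subtype.ext (funext fun s => Int.cast_injective (congrFun hxy s))
  calc _ ≤ Nat.card ({s // s ∉ T} → Bool) := Nat.card_le_card_of_injective _ hinj
    _ = 2 ^ (t - m) := by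
      simp [Fintype.card_subtype_compl, hTcard]

theorem init {Y : Fin (m + 1) → Fin t → ℤ} (hY : IsPartialHadamard (m + 1) t Y) :
    IsPartialHadamard m t (Fin.init Y) :=
  ⟨fun i => hY.1 i.castSucc, fun _ _ hij => hY.2 _ _ (Fin.castSucc_injective _ |>.ne hij)⟩

theorem mulVec_last {Y : Fin (m + 1) → Fin t → ℤ} (hY : IsPartialHadamard (m + 1) t Y) :
    Fin.init Y *ᵥ Y (Fin.last m) = 0 :=
  funext fun i => hY.2 _ _ (Fin.castSucc_lt_last i).ne

end IsPartialHadamard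

theorem numPH_succ_le (m t : ℕ) (ht : 0 < t) :
    numPH (m + 1) t ≤ 2 ^ (t - m) * numPH m t := by
  have := Fintype.ofFinite {Z : Fin m → Fin t → ℤ // IsPartialHadamard m t Z}
  let splitLastRow (Y : {Y : Fin (m + 1) → Fin t → ℤ // IsPartialHadamard (m + 1) t Y}) :
      Σ Z : {Z : Fin m → Fin t → ℤ // IsPartialHadamard m t Z},
        {x : Fin t → ℤ // IsSignVector x ∧ Z.1 *ᵥ x = 0} :=
    ⟨⟨Fin.init Y.1, Y.2.init⟩, ⟨Y.1 (Fin.last m), Y.2.1 _, Y.2.mulVec_last⟩⟩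
  have hsplit : Function.Injective splitLastRow := fun Y Y' h => by
    have hinit : Fin.init Y.1 = Fin.init Y'.1 := congrArg (fun p => p.1.1) h
    have hlast : Y.1 (Fin.last m) = Y'.1 (Fin.last m) := congrArg (fun p => p.2.1) h
    rw [Subtype.ext_iff, ← Fin.snoc_init_self Y.1, ← Fin.snoc_init_self Y'.1, hinit, hlast]
  calc numPH (m + 1) t ≤ ∑ Z : {Z : Fin m → Fin t → ℤ // IsPartialHadamard m t Z},
        Nat.card {x : Fin t → ℤ // IsSignVector x ∧ Z.1 *ᵥ x = 0} :=
        (Nat.card_le_card_of_injective splitLastRow hsplit).trans_eq Nat.card_sigma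
    _ ≤ ∑ _Z : {Z : Fin m → Fin t → ℤ // IsPartialHadamard m t Z}, 2 ^ (t - m) :=
        Finset.sum_le_sum fun Z _ => Z.2.card_signVector_mulVec_eq_zero_le ht
    _ = 2 ^ (t - m) * numPH m t := by
      rw [Finset.sum_const, Finset.card_univ, smul_eq_mul, mul_comm, numPH,
        Nat.card_eq_fintype_card]

theorem numPH_zero (t : ℕ) : numPH 0 t = 1 := by
  have : Unique {Y : Fin 0 → Fin t → ℤ // IsPartialHadamard 0 t Y} :=
    ⟨⟨⟨finZeroElim, finZeroElim, finZeroElim⟩⟩,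
      fun _ => Subtype.ext (funext finZeroElim)⟩
  exact Nat.card_unique

theorem numPH_le_two_pow_sum {t : ℕ} (ht : 0 < t) (k : ℕ) :
    numPH k t ≤ 2 ^ ∑ j ∈ Finset.range k, (t - j) := by
  induction k with
  | zero => simp [numPH_zero]
  | succ k ih =>
    calc numPH (k + 1) t ≤ 2 ^ (t - k) * numPH k t := numPH_succ_le k t ht
      _ ≤ 2 ^ (t - k) * 2 ^ ∑ j ∈ Finset.range k, (t - j) := Nat.mul_le_mul_left _ ih
      _ = 2 ^ ∑ j ∈ Finset.range (k + 1), (t - j) := by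
          rw [← pow_add, Finset.sum_range_succ, add_comm]

theorem sum_range_sub_eq_choose_two (n : ℕ) :
    ∑ j ∈ Finset.range n, (n - j) = (n + 1).choose 2 := by
  have hreflect : ∑ j ∈ Finset.range n, (n - j) = ∑ j ∈ Finset.range n, (j + 1) := by
    rw [← Finset.sum_range_reflect (fun j => j + 1)]
    exact Finset.sum_congr rfl fun j hj => by have := Finset.mem_range.mp hj; omega
  rw [hreflect, ← add_zero (∑ j ∈ _, _), ← Finset.sum_range_succ' (fun j => j),
    Finset.sum_range_id, Nat.choose_two_right, Nat.add_sub_cancel]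

theorem stmt17 (n t : ℕ) (hn : 2 ≤ n) (ht : n ≤ t) :
    numPH n t ≤ 2 ^ (t - n + 1) * numPH (n - 1) t ∧
    numPH n n ≤ 2 ^ ((n + 1).choose 2) := by
  obtain ⟨m, rfl⟩ : ∃ m, n = m + 1 := ⟨n - 1, by omega⟩
  refine ⟨?_, ?_⟩
  · rw [show t - (m + 1) + 1 = t - m by omega, Nat.add_sub_cancel]
    exact numPH_succ_le m t (by omega)
  · simpa [sum_range_sub_eq_choose_two] using numPH_le_two_pow_sum m.succ_pos (m + 1)
end
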